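/- Suppose there are reals 0 < a ≤ M with a ≤ f_k − f_m ≤ M for every m ≠ k. Then the negative gradient along the target logit is sandwiched as Attn_k(q) · (1 − Attn_k(q))² · a² ≤ −∂ℓ/∂q_k ≤ Attn_k(q) · (1 − Attn_k(q))² · M². -/

import Mathlib

/-- Grouped softmax attention score of feature `m`:
`Attn_m(q) = c_m · exp(q_m) / Σ_j c_j · exp(q_j)`. -/
noncomputable def Attn {K : ℕ} (c : Fin K → ℕ) (q : Fin K → ℝ) (m : Fin K) : ℝ :=
  (c m : ℝ) * Real.exp (q m) / ∑ j, (c j : ℝ) * Real.exp (q j)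

/-- The attention prediction `ŷ(q) = Σ_m Attn_m(q) · f_m`. -/
noncomputable def yhat {K : ℕ} (c : Fin K → ℕ) (f : Fin K → ℝ) (q : Fin K → ℝ) : ℝ :=
  ∑ m, Attn c q m * f m

/-- The squared prediction loss `ℓ(q) = ½·(ŷ(q) − f_k)²`. -/
noncomputable def loss {K : ℕ} (c : Fin K → ℕ) (f : Fin K → ℝ) (k : Fin K)
    (q : Fin K → ℝ) : ℝ :=
  (1 / 2) * (yhat c f q - f k) ^ 2

/-- `∂ℓ/∂q_j`: the derivative of the loss along the `j`-th coordinate direction. -/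
noncomputable def pderiv {K : ℕ} (c : Fin K → ℕ) (f : Fin K → ℝ) (k : Fin K)
    (q : Fin K → ℝ) (j : Fin K) : ℝ :=
  deriv (fun t => loss c f k (Function.update q j t)) (q j)

/-!
Writing `w_j = c_j e^{q_j}` and `S = Σ_j w_j`, the residual is
`f_k − ŷ = (Σ_{j ≠ k} w_j (f_k − f_j)) / S`, whose numerator does not depend on `q_k`.
Along the `q_k`-direction the loss is therefore `½ G² / (c_k e^t + D)²` with `G, D` constant,
and differentiating gives `∂ℓ/∂q_k = −Attn_k (f_k − ŷ)²`. On the other hand `f_k − ŷ` is the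
`Attn`-weighted average of the gaps `f_k − f_m`, `m ≠ k`, with total weight `1 − Attn_k`,
so it lies between `a (1 − Attn_k)` and `M (1 − Attn_k)`.
-/

open Real Finset Function

lemma hasDerivAt_half_sq_div_exp_add (G α β t : ℝ) (h : α * exp t + β ≠ 0) :
    HasDerivAt (fun s => 1 / 2 * (G / (α * exp s + β)) ^ 2)
      (-(α * exp t / (α * exp t + β) * (G / (α * exp t + β)) ^ 2)) t := by
  have hden : HasDerivAt (fun s => α * exp s + β) (α * exp t) t :=
    ((hasDerivAt_exp t).const_mul α).add_const β
  refine ((((hasDerivAt_const t G).div hden h).pow 2).const_mul (1 / 2)).congr_deriv ?_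
  simp only [Pi.div_apply, Nat.cast_ofNat, Nat.add_one_sub_one, pow_one]
  field_simp
  ring

section Attention

variable {K : ℕ} (c : Fin K → ℕ) (f q : Fin K → ℝ) (k : Fin K)

lemma sum_weight_pos (hk : 0 < c k) : 0 < ∑ j, (c j : ℝ) * exp (q j) := by
  have hck : (0 : ℝ) < c k := Nat.cast_pos.mpr hk
  exact sum_pos' (fun j _ => by positivity) ⟨k, mem_univ k, by positivity⟩

lemma Attn_nonneg (m : Fin K) : 0 ≤ Attn c q m := by
  unfold Attn
  positivity

lemma sum_Attn (hS : ∑ j, (c j : ℝ) * exp (q j) ≠ 0) : ∑ m, Attn c q m = 1 := by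
  simp only [Attn, ← sum_div, div_self hS]

lemma sum_erase_Attn (hS : ∑ j, (c j : ℝ) * exp (q j) ≠ 0) :
    ∑ m ∈ univ.erase k, Attn c q m = 1 - Attn c q k := by
  rw [← sum_Attn c q hS, ← add_sum_erase _ _ (mem_univ k)]
  ring

lemma one_sub_Attn_nonneg (hS : ∑ j, (c j : ℝ) * exp (q j) ≠ 0) : 0 ≤ 1 - Attn c q k := by
  rw [← sum_erase_Attn c q k hS]
  exact sum_nonneg fun m _ => Attn_nonneg c q m

lemma sub_yhat_eq_sum_Attn_mul (hS : ∑ j, (c j : ℝ) * exp (q j) ≠ 0) :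
    f k - yhat c f q = ∑ m, Attn c q m * (f k - f m) := by
  simp only [yhat, mul_sub, sum_sub_distrib, ← sum_mul, sum_Attn c q hS]
  ring

lemma sub_yhat_eq_sum_erase_Attn_mul (hS : ∑ j, (c j : ℝ) * exp (q j) ≠ 0) :
    f k - yhat c f q = ∑ m ∈ univ.erase k, Attn c q m * (f k - f m) := by
  rw [sub_yhat_eq_sum_Attn_mul c f q k hS, sum_erase _ (by simp)]

lemma sub_yhat_eq_div (hS : ∑ j, (c j : ℝ) * exp (q j) ≠ 0) :
    f k - yhat c f q =
      (∑ j, (c j : ℝ) * exp (q j) * (f k - f j)) / ∑ j, (c j : ℝ) * exp (q j) := by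
  rw [sub_yhat_eq_sum_Attn_mul c f q k hS, sum_div]
  exact sum_congr rfl fun m _ => div_mul_eq_mul_div _ _ _

lemma one_sub_Attn_mul_le_sub_yhat (hS : ∑ j, (c j : ℝ) * exp (q j) ≠ 0) {a : ℝ}
    (hgap : ∀ m, m ≠ k → a ≤ f k - f m) :
    (1 - Attn c q k) * a ≤ f k - yhat c f q := by
  rw [← sum_erase_Attn c q k hS, sum_mul, sub_yhat_eq_sum_erase_Attn_mul c f q k hS]
  exact sum_le_sum fun m hm =>
    mul_le_mul_of_nonneg_left (hgap m (ne_of_mem_erase hm)) (Attn_nonneg c q m)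

lemma sub_yhat_le_one_sub_Attn_mul (hS : ∑ j, (c j : ℝ) * exp (q j) ≠ 0) {M : ℝ}
    (hgap : ∀ m, m ≠ k → f k - f m ≤ M) :
    f k - yhat c f q ≤ (1 - Attn c q k) * M := by
  rw [← sum_erase_Attn c q k hS, sum_mul, sub_yhat_eq_sum_erase_Attn_mul c f q k hS]
  exact sum_le_sum fun m hm =>
    mul_le_mul_of_nonneg_left (hgap m (ne_of_mem_erase hm)) (Attn_nonneg c q m)

lemma sum_weight_update (t : ℝ) :
    ∑ j, (c j : ℝ) * exp (update q k t j) =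
      c k * exp t + ∑ j ∈ univ.erase k, (c j : ℝ) * exp (q j) := by
  rw [← add_sum_erase _ _ (mem_univ k), update_self]
  congr 1
  exact sum_congr rfl fun j hj => by rw [update_of_ne (ne_of_mem_erase hj)]

lemma sum_weight_mul_sub_update (t : ℝ) :
    ∑ j, (c j : ℝ) * exp (update q k t j) * (f k - f j) =
      ∑ j, (c j : ℝ) * exp (q j) * (f k - f j) := by
  refine sum_congr rfl fun j _ => ?_
  rcases eq_or_ne j k with rfl | hj
  · simp
  · rw [update_of_ne hj]

lemma loss_update (hk : 0 < c k) (t : ℝ) :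
    loss c f k (update q k t) =
      1 / 2 * ((∑ j, (c j : ℝ) * exp (q j) * (f k - f j)) /
        (c k * exp t + ∑ j ∈ univ.erase k, (c j : ℝ) * exp (q j))) ^ 2 := by
  rw [loss, ← neg_sub, neg_sq, sub_yhat_eq_div c f _ k (sum_weight_pos c _ k hk).ne',
    sum_weight_update, sum_weight_mul_sub_update]

lemma pderiv_self (hk : 0 < c k) :
    pderiv c f k q k = -(Attn c q k * (f k - yhat c f q) ^ 2) := by
  have hS := sum_weight_pos c q k hk
  have hsplit := sum_weight_update c q k (q k)
  rw [update_eq_self] at hsplit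
  rw [pderiv, funext (loss_update c f q k hk),
    (hasDerivAt_half_sq_div_exp_add _ _ _ _ (hsplit ▸ hS.ne')).deriv, ← hsplit,
    sub_yhat_eq_div c f q k hS.ne', Attn]

end Attention

theorem target_gradient_sandwich_general (K : ℕ)
    (c : Fin K → ℕ) (hc : ∀ m, 1 ≤ c m)
    (q : Fin K → ℝ) (f : Fin K → ℝ) (k : Fin K)
    (a M : ℝ) (ha : 0 < a)
    (hgap : ∀ m, m ≠ k → a ≤ f k - f m ∧ f k - f m ≤ M) :
    Attn c q k * (1 - Attn c q k) ^ 2 * a ^ 2 ≤ -(pderiv c f k q k) ∧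
    -(pderiv c f k q k) ≤ Attn c q k * (1 - Attn c q k) ^ 2 * M ^ 2 := by
  have hS := (sum_weight_pos c q k (hc k)).ne'
  have hA := Attn_nonneg c q k
  have hlow := one_sub_Attn_mul_le_sub_yhat c f q k hS fun m hm => (hgap m hm).1
  have hhigh := sub_yhat_le_one_sub_Attn_mul c f q k hS fun m hm => (hgap m hm).2
  have hlow_nonneg : 0 ≤ (1 - Attn c q k) * a := mul_nonneg (one_sub_Attn_nonneg c q k hS) ha.le
  rw [pderiv_self c f q k (hc k), neg_neg]
  constructor
  · calc Attn c q k * (1 - Attn c q k) ^ 2 * a ^ 2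
          = Attn c q k * ((1 - Attn c q k) * a) ^ 2 := by ring
      _ ≤ Attn c q k * (f k - yhat c f q) ^ 2 := by gcongr
  · calc Attn c q k * (f k - yhat c f q) ^ 2
          ≤ Attn c q k * ((1 - Attn c q k) * M) ^ 2 := by
          gcongr
          exact hlow_nonneg.trans hlow
      _ = Attn c q k * (1 - Attn c q k) ^ 2 * M ^ 2 := by ring

/-- If `a ≤ f_k − f_m ≤ M` for every `m ≠ k` (with `0 < a ≤ M`), then the negative
target-logit gradient is sandwiched as
`Attn_k·(1 − Attn_k)²·a² ≤ −∂ℓ/∂q_k ≤ Attn_k·(1 − Attn_k)²·M²`. -/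
theorem target_gradient_sandwich (K : ℕ) (hK : 2 ≤ K)
    (c : Fin K → ℕ) (hc : ∀ m, 1 ≤ c m)
    (q : Fin K → ℝ) (f : Fin K → ℝ) (k : Fin K)
    (a M : ℝ) (ha : 0 < a) (haM : a ≤ M)
    (hgap : ∀ m, m ≠ k → a ≤ f k - f m ∧ f k - f m ≤ M) :
    Attn c q k * (1 - Attn c q k) ^ 2 * a ^ 2 ≤ -(pderiv c f k q k) ∧
    -(pderiv c f k q k) ≤ Attn c q k * (1 - Attn c q k) ^ 2 * M ^ 2 :=
  target_gradient_sandwich_general K c hc q f k a M ha hgap
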